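/- Let γ > 0, set α = 2/γ², and let n ≥ 0 be an integer. Then for every z ∈ ℂ, (2/(πγ²))^{1/4} ∫_ℝ exp(−(x − √2·z)²/γ²) · ψ_n^α(x) dx = e_n^γ(z); that is, the RBF Segal–Bargmann transform maps the n-th normalized Hermite function ψ_n^α to the n-th RBF basis function e_n^γ. -/

import Mathlib

open MeasureTheory Complex

/-- The physicists' Hermite polynomials, via the recurrence
`H_0 = 1`, `H_{n+1}(x) = 2x·H_n(x) − H_n'(x)`. -/
noncomputable def physHermite : ℕ → Polynomial ℝ
  | 0 => 1
  | n + 1 => 2 * Polynomial.X * physHermite n - Polynomial.derivative (physHermite n)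

/-- The normalized Hermite functions
`ψ_n^α(x) = (α/π)^{1/4} (2ⁿ n!)^{−1/2} H_n(√α x) exp(−α x²/2)`. -/
noncomputable def hermiteFun (α : ℝ) (n : ℕ) (x : ℝ) : ℝ :=
  (α / Real.pi) ^ ((1 : ℝ) / 4) * (Real.sqrt (2 ^ n * n.factorial))⁻¹ *
    (physHermite n).eval (Real.sqrt α * x) * Real.exp (-α * x ^ 2 / 2)

/-- The orthonormal basis functions of the RBF space:
`e_n^γ(z) = √(2ⁿ/(γ^{2n} n!)) zⁿ exp(−z²/γ²)`. -/
noncomputable def rbfBasis (γ : ℝ) (n : ℕ) (z : ℂ) : ℂ :=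
  (Real.sqrt (2 ^ n / (γ ^ (2 * n) * n.factorial)) : ℂ) * z ^ n *
    Complex.exp (-z ^ 2 / (γ : ℂ) ^ 2)

/-- The RBF Segal–Bargmann transform
`𝔅_γψ(z) = (2/(πγ²))^{1/4} ∫_ℝ exp(−(x − √2 z)²/γ²) ψ(x) dx`. -/
noncomputable def rbfSB (γ : ℝ) (ψ : ℝ → ℂ) (z : ℂ) : ℂ :=
  (((2 / (Real.pi * γ ^ 2)) ^ ((1 : ℝ) / 4) : ℝ) : ℂ) *
    ∫ x : ℝ, Complex.exp (-((x : ℂ) - (Real.sqrt 2 : ℂ) * z) ^ 2 / (γ : ℂ) ^ 2) * ψ x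

/-
With α = 2/γ², completing the square turns the integrand of the transform into a
constant multiple of H_n(c x) exp(-(c x - z/γ)²) with c = √2/γ, and the substitution u = c x
reduces everything to ∫ H_n(u) exp(-(u - w)²) du = √π (2w)ⁿ for complex w. For n = 0 this is the
Gaussian integral; since H_{n+1} = 2X H_n - H_n', one integration by parts against the shifted
Gaussian, whose derivative is -2(u - w) times itself, multiplies the integral by 2w.
-/

open Polynomial

theorem integrable_pow_mul_exp_neg_sq (k : ℕ) :
    Integrable fun x : ℝ => x ^ k * Real.exp (-x ^ 2) := by
  simpa [Real.rpow_natCast] using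
    integrable_rpow_mul_exp_neg_mul_sq one_pos (s := k) (neg_one_lt_zero.trans_le k.cast_nonneg)

theorem integrable_eval_mul_exp_neg_sq (P : ℝ[X]) :
    Integrable fun x : ℝ => P.eval x * Real.exp (-x ^ 2) := by
  induction P using Polynomial.induction_on' with
  | add p q hp hq => exact (hp.add hq).congr (ae_of_all _ fun x => by simp [add_mul])
  | monomial k a => simpa [mul_assoc] using (integrable_pow_mul_exp_neg_sq k).const_mul a

theorem norm_cexp_neg_sq_add_re_sub (w : ℂ) (t : ℝ) :
    ‖cexp (-(((t + w.re : ℝ) : ℂ) - w) ^ 2)‖ = Real.exp (-t ^ 2) * Real.exp (w.im ^ 2) := by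
  rw [Complex.norm_exp, ← Real.exp_add]
  congr 1
  simp only [neg_re, sq, mul_re, sub_re, sub_im, ofReal_re, ofReal_im]
  ring

theorem integrable_eval_mul_cexp_neg_sq_sub (P : ℝ[X]) (w : ℂ) :
    Integrable fun u : ℝ => ((P.eval u : ℝ) : ℂ) * cexp (-((u : ℂ) - w) ^ 2) := by
  have hshift : Integrable fun t : ℝ =>
      ((P.eval (t + w.re) : ℝ) : ℂ) * cexp (-(((t + w.re : ℝ) : ℂ) - w) ^ 2) := by
    refine ((integrable_eval_mul_exp_neg_sq (P.comp (X + C w.re))).norm.mul_const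
      (Real.exp (w.im ^ 2))).mono' (by fun_prop) (ae_of_all _ fun t => le_of_eq ?_)
    rw [norm_mul, norm_cexp_neg_sq_add_re_sub, norm_mul, norm_real,
      Real.norm_of_nonneg (Real.exp_pos _).le]
    simp [mul_assoc]
  simpa using hshift.comp_sub_right w.re

theorem integral_cexp_neg_sq_sub (w : ℂ) :
    ∫ u : ℝ, cexp (-((u : ℂ) - w) ^ 2) = Real.sqrt Real.pi := by
  have hquad : ∀ u : ℝ, -((u : ℂ) - w) ^ 2 = -1 * (u : ℂ) ^ 2 + 2 * w * u + -w ^ 2 :=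
    fun u => by ring
  simp_rw [hquad]
  rw [integral_cexp_quadratic (by simp) (2 * w) (-w ^ 2), Real.sqrt_eq_rpow,
    ofReal_cpow Real.pi_pos.le, show -w ^ 2 - (2 * w) ^ 2 / (4 * -1) = (0 : ℂ) by ring,
    Complex.exp_zero]
  norm_num

theorem hasDerivAt_eval_mul_cexp_neg_sq_sub (P : ℝ[X]) (w : ℂ) (x : ℝ) :
    HasDerivAt (fun u : ℝ => ((P.eval u : ℝ) : ℂ) * cexp (-((u : ℂ) - w) ^ 2))
      (2 * w * (((P.eval x : ℝ) : ℂ) * cexp (-((x : ℂ) - w) ^ 2))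
        - (((2 * X * P - derivative P).eval x : ℝ) : ℂ) * cexp (-((x : ℂ) - w) ^ 2)) x := by
  have hgauss : HasDerivAt (fun u : ℝ => cexp (-((u : ℂ) - w) ^ 2))
      (cexp (-((x : ℂ) - w) ^ 2) * -(2 * ((x : ℂ) - w))) x := by
    simpa using ((((hasDerivAt_id (x : ℂ)).sub_const w).pow 2).neg.cexp).comp_ofReal
  refine ((P.hasDerivAt x).ofReal_comp.mul hgauss).congr_deriv ?_
  simp only [eval_sub, eval_mul, eval_X, eval_ofNat]
  push_cast
  ring

theorem integral_eval_two_mul_X_mul_sub_derivative_mul_cexp_neg_sq_sub (P : ℝ[X]) (w : ℂ) :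
    ∫ u : ℝ, (((2 * X * P - derivative P).eval u : ℝ) : ℂ) * cexp (-((u : ℂ) - w) ^ 2)
      = 2 * w * ∫ u : ℝ, ((P.eval u : ℝ) : ℂ) * cexp (-((u : ℂ) - w) ^ 2) := by
  have hP := integrable_eval_mul_cexp_neg_sq_sub P w
  have hQ := integrable_eval_mul_cexp_neg_sq_sub (2 * X * P - derivative P) w
  have hboundary := integral_eq_zero_of_hasDerivAt_of_integrable
    (hasDerivAt_eval_mul_cexp_neg_sq_sub P w) ((hP.const_mul (2 * w)).sub hQ) hP
  rw [integral_sub (hP.const_mul (2 * w)) hQ, integral_const_mul] at hboundary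
  linear_combination -hboundary

theorem integral_physHermite_mul_cexp_neg_sq_sub (n : ℕ) (w : ℂ) :
    ∫ u : ℝ, (((physHermite n).eval u : ℝ) : ℂ) * cexp (-((u : ℂ) - w) ^ 2)
      = Real.sqrt Real.pi * (2 * w) ^ n := by
  induction n with
  | zero => simpa [physHermite] using integral_cexp_neg_sq_sub w
  | succ n ih =>
    rw [physHermite, integral_eval_two_mul_X_mul_sub_derivative_mul_cexp_neg_sq_sub, ih]
    ring

theorem integral_physHermite_comp_mul_cexp_neg_sq_sub (n : ℕ) (w : ℂ) {c : ℝ} (hc : 0 < c) :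
    ∫ x : ℝ, (((physHermite n).eval (c * x) : ℝ) : ℂ) * cexp (-(((c * x : ℝ) : ℂ) - w) ^ 2)
      = ((c⁻¹ * Real.sqrt Real.pi : ℝ) : ℂ) * (2 * w) ^ n := by
  rw [Measure.integral_comp_mul_left
      (fun u : ℝ => (((physHermite n).eval u : ℝ) : ℂ) * cexp (-((u : ℂ) - w) ^ 2)) c,
    integral_physHermite_mul_cexp_neg_sq_sub, abs_of_pos (inv_pos.2 hc), real_smul]
  push_cast
  ring

theorem rpow_quarter_mul_self {a : ℝ} (ha : 0 ≤ a) :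
    a ^ ((1 : ℝ) / 4) * a ^ ((1 : ℝ) / 4) = Real.sqrt a := by
  rw [← Real.rpow_add' ha (by norm_num), Real.sqrt_eq_rpow]
  norm_num

theorem rbfSB_hermite_normalization {γ : ℝ} (hγ : 0 < γ) (n : ℕ) :
    (2 / (Real.pi * γ ^ 2)) ^ ((1 : ℝ) / 4) * (2 / γ ^ 2 / Real.pi) ^ ((1 : ℝ) / 4)
        * (Real.sqrt (2 ^ n * n.factorial))⁻¹ * (Real.sqrt 2 / γ)⁻¹ * Real.sqrt Real.pi
        * (2 / γ) ^ n
      = Real.sqrt (2 ^ n / (γ ^ (2 * n) * n.factorial)) := by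
  have hquarter : (2 / (Real.pi * γ ^ 2)) ^ ((1 : ℝ) / 4) * (2 / γ ^ 2 / Real.pi) ^ ((1 : ℝ) / 4)
      = Real.sqrt 2 / (Real.sqrt Real.pi * γ) := by
    rw [show 2 / γ ^ 2 / Real.pi = 2 / (Real.pi * γ ^ 2) by ring,
      rpow_quarter_mul_self (by positivity), Real.sqrt_div' _ (by positivity),
      Real.sqrt_mul Real.pi_pos.le, Real.sqrt_sq hγ.le]
  have hnorm : Real.sqrt (2 ^ n / (γ ^ (2 * n) * n.factorial))
      = (2 / γ) ^ n / Real.sqrt (2 ^ n * n.factorial) := by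
    rw [show (2 : ℝ) ^ n / (γ ^ (2 * n) * n.factorial)
          = ((2 / γ) ^ n) ^ 2 / (2 ^ n * n.factorial) by
        rw [div_pow, div_pow, ← pow_mul, ← pow_mul, pow_mul']
        field_simp
        ring,
      Real.sqrt_div' _ (by positivity), Real.sqrt_sq (by positivity)]
  rw [hnorm, hquarter]
  field_simp

theorem rbfSB_kernel_mul_gaussian {γ : ℝ} (hγ : γ ≠ 0) (z : ℂ) (x : ℝ) :
    cexp (-((x : ℂ) - Real.sqrt 2 * z) ^ 2 / γ ^ 2) * cexp (-(2 / γ ^ 2) * x ^ 2 / 2)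
      = cexp (-z ^ 2 / γ ^ 2) * cexp (-(Real.sqrt 2 / γ * x - z / γ) ^ 2) := by
  have hγ' : (γ : ℂ) ≠ 0 := ofReal_ne_zero.2 hγ
  have hsq2 : ((Real.sqrt 2 : ℝ) : ℂ) ^ 2 = 2 := by
    rw [← ofReal_pow, Real.sq_sqrt zero_le_two, ofReal_ofNat]
  rw [← Complex.exp_add, ← Complex.exp_add]
  congr 1
  field_simp
  linear_combination ((x : ℂ) ^ 2 - z ^ 2) * hsq2

theorem rbfSB_hermite (γ : ℝ) (hγ : 0 < γ) (α : ℝ) (hα : α = 2 / γ ^ 2) (n : ℕ) (z : ℂ) :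
    rbfSB γ (fun x => (hermiteFun α n x : ℂ)) z = rbfBasis γ n z := by
  subst hα
  have hc : 0 < Real.sqrt 2 / γ := by positivity
  have hsqrt : Real.sqrt (2 / γ ^ 2) = Real.sqrt 2 / γ := by
    rw [Real.sqrt_div' _ (sq_nonneg γ), Real.sqrt_sq hγ.le]
  have hintegrand (x : ℝ) :
      cexp (-((x : ℂ) - Real.sqrt 2 * z) ^ 2 / γ ^ 2) * (hermiteFun (2 / γ ^ 2) n x : ℂ)
        = (((2 / γ ^ 2 / Real.pi) ^ ((1 : ℝ) / 4) * (Real.sqrt (2 ^ n * n.factorial))⁻¹ : ℝ) : ℂ)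
          * cexp (-z ^ 2 / γ ^ 2) * ((((physHermite n).eval (Real.sqrt 2 / γ * x) : ℝ) : ℂ)
            * cexp (-(((Real.sqrt 2 / γ * x : ℝ) : ℂ) - z / γ) ^ 2)) := by
    rw [hermiteFun, hsqrt]
    push_cast
    linear_combination (((2 / γ ^ 2 / Real.pi) ^ ((1 : ℝ) / 4) : ℝ) : ℂ)
      * (((Real.sqrt (2 ^ n * n.factorial)) : ℝ) : ℂ)⁻¹
      * (((physHermite n).eval (Real.sqrt 2 / γ * x) : ℝ) : ℂ)
      * rbfSB_kernel_mul_gaussian hγ.ne' z x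
  rw [rbfSB, rbfBasis, funext hintegrand, integral_const_mul,
    integral_physHermite_comp_mul_cexp_neg_sq_sub n _ hc, ← rbfSB_hermite_normalization hγ n]
  push_cast
  ring
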